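/- Let t > 2 be an integer and k ≥ 3 an odd integer. Then the radio k-labeling number of the infinite distance graph D(t-1,t) satisfies rl_k(D(t-1,t)) ≤ (t/2)k² + k - (t+2)/2. -/

import Mathlib

/-- The infinite distance graph on `ℤ` with distance set `D`: distinct integers
`i, j` are adjacent iff `|i - j| ∈ D`. -/
def distGraph (D : Set ℤ) : SimpleGraph ℤ where
  Adj i j := i ≠ j ∧ |i - j| ∈ D
  symm := by
    refine ⟨?_⟩
    intro i j h
    exact ⟨h.1.symm, by rw [abs_sub_comm]; exact h.2⟩
  loopless := by
    refine ⟨?_⟩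
    intro i h
    exact h.1 rfl

/-- `c : ℤ → ℕ` is a radio `k`-labeling of the graph `G` on `ℤ`:
`|c(u) - c(v)| ≥ k + 1 - d(u,v)` for all distinct `u, v`. -/
def IsRadioLabeling (G : SimpleGraph ℤ) (k : ℕ) (c : ℤ → ℕ) : Prop :=
  ∀ x y : ℤ, x ≠ y → (k : ℤ) + 1 - G.dist x y ≤ |(c x : ℤ) - c y|

/-!
Write `k = 2m + 1`, `A = t(m + 1) + 2` and `P = 2A - 1 = tk + t + 3`; the labeling gives `x`
the label `m · i`, where `i` is the position of `x % P` in the order `0, A, 1, A + 1, …, A - 1`.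
Every edge joins integers at most `t` apart, so `|x - y| ≤ t · d(x, y)`. Labels that differ by
`0`, `m` or `2m` come from residues that are equal, `A - 1` or `A` apart, or consecutive. Since
`x - y` is congruent mod `P` to the difference of the residues, and two integers congruent mod `P`
whose absolute values sum to less than `P` are equal, `x - y` then has absolute value at least
`P`, at least `A - 1`, or different from `t - 1` and `t`, which makes `d(x, y)` large enough.
-/

open SimpleGraph

namespace distGraph

lemma abs_sub_le_mul_length {D : Set ℤ} {n : ℤ} (hD : ∀ d ∈ D, d ≤ n) {x y : ℤ}
    (w : (distGraph D).Walk x y) : |x - y| ≤ n * w.length := by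
  induction w with
  | nil => simp
  | @cons a b c hab w ih =>
    calc |a - c| ≤ |a - b| + |b - c| := abs_sub_le a b c
      _ ≤ n + n * w.length := add_le_add (hD _ hab.2) ih
      _ = n * (w.cons hab).length := by rw [Walk.length_cons]; push_cast; ring

variable {s : ℤ}

lemma reachable_add_one (hs : 2 ≤ s) (x : ℤ) : (distGraph {s - 1, s}).Reachable x (x + 1) := by
  have up : (distGraph {s - 1, s}).Adj x (x + s) := by
    refine ⟨by omega, ?_⟩
    rw [show x - (x + s) = -s by ring, abs_neg, abs_of_nonneg (by omega)]
    simp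
  have down : (distGraph {s - 1, s}).Adj (x + s) (x + 1) := by
    refine ⟨by omega, ?_⟩
    rw [show x + s - (x + 1) = s - 1 by ring, abs_of_nonneg (by omega)]
    simp
  exact up.reachable.trans down.reachable

lemma connected (hs : 2 ≤ s) : (distGraph {s - 1, s}).Connected := by
  have from_zero (x : ℤ) : (distGraph {s - 1, s}).Reachable 0 x := by
    induction x using Int.induction_on with
    | zero => rfl
    | succ i ih => exact ih.trans (reachable_add_one hs i)
    | pred i ih => exact ih.trans (by simpa using (reachable_add_one hs (-(i : ℤ) - 1)).symm)
  exact ⟨fun x y => (from_zero x).symm.trans (from_zero y)⟩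

lemma abs_sub_le_mul_dist (hs : 2 ≤ s) (x y : ℤ) :
    |x - y| ≤ s * (distGraph {s - 1, s}).dist x y := by
  obtain ⟨w, hw⟩ := (connected hs).exists_walk_length_eq_dist x y
  rw [← hw]
  exact abs_sub_le_mul_length (by simp) w

lemma lt_dist_of_mul_lt_abs_sub (hs : 2 ≤ s) {x y n : ℤ} (h : s * n < |x - y|) :
    n < (distGraph {s - 1, s}).dist x y :=
  lt_of_mul_lt_mul_left (h.trans_le (abs_sub_le_mul_dist hs x y)) (by omega)

lemma one_lt_dist (hs : 2 ≤ s) {x y : ℤ} (hne : x ≠ y) (h : |x - y| ≠ s - 1 ∧ |x - y| ≠ s) :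
    1 < (distGraph {s - 1, s}).dist x y :=
  (connected hs).one_lt_dist_of_ne_of_not_adj hne fun hadj => by
    rcases hadj.2 with h' | h' <;> simp_all

end distGraph

lemma Int.ModEq.eq_of_abs_add_abs_lt {n a b : ℤ} (h : a ≡ b [ZMOD n]) (hab : |a| + |b| < n) :
    a = b := by
  have := Int.eq_zero_of_abs_lt_dvd h.dvd ((abs_sub b a).trans_lt (by rwa [add_comm]))
  omega

def interleave (A r : ℤ) : ℤ := if r < A then 2 * r else 2 * (r - A) + 1

section interleave

variable {A a b : ℤ}

lemma interleave_injective : Function.Injective (interleave A) := by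
  intro a b h
  unfold interleave at h
  split_ifs at h <;> omega

lemma interleave_nonneg (ha : 0 ≤ a) : 0 ≤ interleave A a := by
  unfold interleave
  split_ifs <;> omega

lemma interleave_le (ha : a < 2 * A - 1) : interleave A a ≤ 2 * A - 2 := by
  unfold interleave
  split_ifs <;> omega

lemma abs_sub_eq_one_of_abs_interleave_sub_eq_two (h : |interleave A a - interleave A b| = 2) :
    |a - b| = 1 := by
  unfold interleave at h
  split_ifs at h <;> grind

lemma abs_sub_mem_of_abs_interleave_sub_eq_one (h : |interleave A a - interleave A b| = 1) :
    |a - b| = A - 1 ∨ |a - b| = A := by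
  unfold interleave at h
  split_ifs at h <;> grind

end interleave

/-- With `k = 2m + 1` and step `l = k - 1 = 2m`, the paper's labels `j · l` of the first
`t(m + 1) + 2` positions of a period and `l / 2 + j · l` of the others are `m · 2j` and
`m · (2j + 1)`. -/
def radioLabel (t m x : ℤ) : ℤ := m * interleave (t * (m + 1) + 2) (x % (2 * t * (m + 1) + 3))

section radioLabel

variable {t m : ℤ}

lemma radioLabel_nonneg (ht : 0 ≤ t) (hm : 0 ≤ m) (x : ℤ) : 0 ≤ radioLabel t m x :=
  mul_nonneg hm (interleave_nonneg (Int.emod_nonneg _ (by nlinarith)))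

lemma radioLabel_le (ht : 0 ≤ t) (hm : 0 ≤ m) (x : ℤ) :
    radioLabel t m x ≤ m * (2 * t * (m + 1) + 2) := by
  have hlt := Int.emod_lt_of_pos x (by nlinarith : 0 < 2 * t * (m + 1) + 3)
  have := interleave_le (A := t * (m + 1) + 2) (by linarith : x % (2 * t * (m + 1) + 3) < _)
  unfold radioLabel
  nlinarith

lemma abs_radioLabel_sub_ge (ht : 3 ≤ t) (hm : 1 ≤ m) {x y : ℤ} (hxy : x ≠ y) :
    2 * m + 2 - (distGraph {t - 1, t}).dist x y ≤ |radioLabel t m x - radioLabel t m y| := by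
  set A := t * (m + 1) + 2
  set P := 2 * t * (m + 1) + 3
  set d : ℤ := ((distGraph {t - 1, t}).dist x y : ℤ)
  have hP : P = 2 * A - 1 := by ring
  have hmod : x - y ≡ x % P - y % P [ZMOD P] :=
    ((Int.mod_modEq x P).sub (Int.mod_modEq y P)).symm
  have hd : 1 ≤ d := by
    have := (distGraph.connected (s := t) (by omega)).pos_dist_of_ne hxy
    omega
  have htA : t ≤ t * (m + 1) := le_mul_of_one_le_right (by omega) (by omega)
  unfold radioLabel
  rw [← mul_sub, abs_mul, abs_of_pos (by omega)]
  obtain h | h | h | h : |interleave A (x % P) - interleave A (y % P)| = 0 ∨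
      |interleave A (x % P) - interleave A (y % P)| = 1 ∨
      |interleave A (x % P) - interleave A (y % P)| = 2 ∨
      3 ≤ |interleave A (x % P) - interleave A (y % P)| := by
    have := abs_nonneg (interleave A (x % P) - interleave A (y % P))
    omega
  · have hres : x % P = y % P := interleave_injective (by simpa [sub_eq_zero] using h)
    have hfar : t * (2 * m + 2) < |x - y| := by
      by_contra! hnear
      rw [hres, sub_self] at hmod
      have := hmod.eq_of_abs_add_abs_lt (by rw [abs_zero, add_zero]; linarith)
      omega
    have := distGraph.lt_dist_of_mul_lt_abs_sub (by omega) hfar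
    rw [h]
    omega
  · have hres := abs_sub_mem_of_abs_interleave_sub_eq_one h
    have hfar : t * (m + 1) < |x - y| := by
      by_contra! hnear
      have := hmod.eq_of_abs_add_abs_lt (by omega)
      rw [this] at hnear
      omega
    have := distGraph.lt_dist_of_mul_lt_abs_sub (by omega) hfar
    rw [h]
    omega
  · have hres := abs_sub_eq_one_of_abs_interleave_sub_eq_two h
    have hnadj : |x - y| ≠ t - 1 ∧ |x - y| ≠ t := by
      by_contra! hadj
      have := hmod.eq_of_abs_add_abs_lt (by omega)
      rw [this] at hadj
      omega
    have := distGraph.one_lt_dist (by omega) hxy hnadj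
    rw [h]
    omega
  · nlinarith

end radioLabel

/-- For `t > 2` and odd `k ≥ 3`, `rl_k(D(t-1,t)) ≤ (t/2)k² + k - (t+2)/2`. -/
theorem radio_upper_Dtsub1t (t k : ℕ) (ht : 2 < t) (hk : 3 ≤ k) (hko : Odd k) :
    ∃ c : ℤ → ℕ, IsRadioLabeling (distGraph {(t : ℤ) - 1, (t : ℤ)}) k c ∧
      ∀ x : ℤ, (c x : ℝ) ≤ ((t : ℝ) / 2) * (k : ℝ) ^ 2 + k - ((t : ℝ) + 2) / 2 := by
  obtain ⟨m, rfl⟩ := hko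
  have hm : (1 : ℤ) ≤ m := by omega
  have hlabel (x : ℤ) : ((radioLabel t m x).toNat : ℤ) = radioLabel t m x :=
    Int.toNat_of_nonneg (radioLabel_nonneg (by omega) (by omega) x)
  refine ⟨fun x => (radioLabel t m x).toNat, fun x y hxy => ?_, fun x => ?_⟩
  · rw [hlabel, hlabel]
    push_cast
    linarith [abs_radioLabel_sub_ge (t := t) (by omega) hm hxy]
  · have hle : ((radioLabel t m x).toNat : ℤ) ≤ m * (2 * t * (m + 1) + 2) :=
      (hlabel x).trans_le (radioLabel_le (by omega) (by omega) x)
    have hleR : ((radioLabel t m x).toNat : ℝ) ≤ m * (2 * t * (m + 1) + 2) := by exact_mod_cast hle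
    push_cast
    linarith
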